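/- arXiv:1912.08570 — 3 statements merged into one kernel-verified Lean document; each statement's English description precedes it below -/
import Mathlib

section
/- Let m be a nonzero integer, S an open subset of {(ρ,z) ∈ ℝ² : ρ > 0}, and u = (u_ρ, u_z, u_θ) : S → ℝ³ continuously differentiable on S with curl^m u = 0 at every point of S. Then u = grad^m(v) on S, where v = −(ρ/m) u_θ; explicitly, u_ρ = ∂_ρ(−(ρ/m) u_θ), u_z = ∂_z(−(ρ/m) u_θ), and u_θ = −(m/ρ)(−(ρ/m) u_θ). (Exactness at the second stage of the mode-m cylindrical sequence: every curl^m-free vector field is a mode-m gradient.) -/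
/-- Partial derivative in the first (ρ) direction. -/
noncomputable def pdRho (f : ℝ × ℝ → ℝ) (p : ℝ × ℝ) : ℝ := fderiv ℝ f p (1, 0)

/-- Partial derivative in the second (z) direction. -/
noncomputable def pdZ (f : ℝ × ℝ → ℝ) (p : ℝ × ℝ) : ℝ := fderiv ℝ f p (0, 1)

/-! With `v = -(ρ/m) u_θ`, the identity `u_θ = -(m/ρ) v` is algebra, while the z- and
ρ-components of `curl^m u = 0` say exactly `∂_ρ(ρ u_θ) = -m u_ρ` and `ρ ∂_z u_θ = -m u_z`.
Pulling the constant `-1/m` out of `∂_ρ` and `∂_z`, and `ρ` out of `∂_z`, gives the other two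
identities. -/

theorem fderiv_const_mul_field {E : Type*} [NormedAddCommGroup E] [NormedSpace ℝ E]
    (c : ℝ) (f : E → ℝ) : fderiv ℝ (fun p => c * f p) = c • fderiv ℝ f :=
  fderiv_const_smul_field c

theorem pdRho_const_mul (c : ℝ) (f : ℝ × ℝ → ℝ) (q : ℝ × ℝ) :
    pdRho (fun p => c * f p) q = c * pdRho f q := by
  simp [pdRho, fderiv_const_mul_field]

theorem pdZ_const_mul (c : ℝ) (f : ℝ × ℝ → ℝ) (q : ℝ × ℝ) :
    pdZ (fun p => c * f p) q = c * pdZ f q := by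
  simp [pdZ, fderiv_const_mul_field]

theorem pdZ_fst_mul {f : ℝ × ℝ → ℝ} {q : ℝ × ℝ} (hf : DifferentiableAt ℝ f q) :
    pdZ (fun p => p.1 * f p) q = q.1 * pdZ f q := by
  simp [pdZ, fderiv_fun_mul differentiableAt_fst hf, fderiv_fst]

theorem curlm_free_is_gradm_general (m : ℤ) (hm : m ≠ 0) (S : Set (ℝ × ℝ)) (hS : IsOpen S)
    (hSpos : ∀ p ∈ S, 0 < p.1) (u1 u2 u3 : ℝ × ℝ → ℝ)
    (hu3 : ContDiffOn ℝ 1 u3 S)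
    (hcurl : ∀ q ∈ S,
      (-(((m : ℝ) / q.1) * u2 q) - pdZ u3 q,
        (1 / q.1) * (pdRho (fun p => p.1 * u3 p) q + (m : ℝ) * u1 q),
        pdZ u1 q - pdRho u2 q)
      = ((0 : ℝ), (0 : ℝ), (0 : ℝ))) :
    ∀ q ∈ S,
      u1 q = pdRho (fun p => -(p.1 / (m : ℝ)) * u3 p) q
      ∧ u2 q = pdZ (fun p => -(p.1 / (m : ℝ)) * u3 p) q
      ∧ u3 q = -(((m : ℝ) / q.1) * (-(q.1 / (m : ℝ)) * u3 q)) := by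
  intro q hq
  have hρ : q.1 ≠ 0 := (hSpos q hq).ne'
  have hm' : (m : ℝ) ≠ 0 := Int.cast_ne_zero.mpr hm
  have hu3q : DifferentiableAt ℝ u3 q :=
    (hu3.contDiffAt (hS.mem_nhds hq)).differentiableAt one_ne_zero
  obtain ⟨hcurl_ρ, hcurl_z, -⟩ : _ ∧ _ ∧ _ := by simpa only [Prod.mk.injEq] using hcurl q hq
  have hv : (fun p : ℝ × ℝ => -(p.1 / (m : ℝ)) * u3 p) = fun p => -(1 / m) * (p.1 * u3 p) := by
    funext p; ring
  rw [hv, pdRho_const_mul, pdZ_const_mul, pdZ_fst_mul hu3q]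
  refine ⟨?_, ?_, by field_simp⟩
  · field_simp at hcurl_z ⊢; linarith
  · field_simp at hcurl_ρ ⊢; linarith

/-- Exactness at the second stage: every `curl^m`-free vector field is a mode-m gradient,
namely `u = grad^m(−(ρ/m) u_θ)`. -/
theorem curlm_free_is_gradm (m : ℤ) (hm : m ≠ 0) (S : Set (ℝ × ℝ)) (hS : IsOpen S)
    (hSpos : ∀ p ∈ S, 0 < p.1) (u1 u2 u3 : ℝ × ℝ → ℝ)
    (hu1 : ContDiffOn ℝ 1 u1 S) (hu2 : ContDiffOn ℝ 1 u2 S) (hu3 : ContDiffOn ℝ 1 u3 S)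
    (hcurl : ∀ q ∈ S,
      (-(((m : ℝ) / q.1) * u2 q) - pdZ u3 q,
        (1 / q.1) * (pdRho (fun p => p.1 * u3 p) q + (m : ℝ) * u1 q),
        pdZ u1 q - pdRho u2 q)
      = ((0 : ℝ), (0 : ℝ), (0 : ℝ))) :
    ∀ q ∈ S,
      u1 q = pdRho (fun p => -(p.1 / (m : ℝ)) * u3 p) q
      ∧ u2 q = pdZ (fun p => -(p.1 / (m : ℝ)) * u3 p) q
      ∧ u3 q = -(((m : ℝ) / q.1) * (-(q.1 / (m : ℝ)) * u3 q)) :=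
  curlm_free_is_gradm_general m hm S hS hSpos u1 u2 u3 hu3 hcurl
end

section
/- Let m be a nonzero integer with |m| ≥ 1, R > 0, S an open subset of (0,R) × ℝ, and ṽ : S → ℝ continuously differentiable on S. Then, as inequalities of (possibly infinite) Lebesgue integrals of nonnegative measurable functions, ∫_S ((ρ/m) ṽ)² ρ dρ dz ≤ R³ ∫_S ṽ² dρ dz and ∫_S |grad^m((ρ/m) ṽ)|² ρ dρ dz ≤ 3R ∫_S ṽ² dρ dz + 2R³ ∫_S ((∂_ρ ṽ)² + (∂_z ṽ)²) dρ dz, where |·| denotes the Euclidean norm on ℝ³. (Conformity bound for the mode-m scalar space: if ṽ ∈ H¹(S) then η_{m,0}^{-1}(ṽ) = (ρ/m) ṽ lies in the weighted space H_ρ(grad^m; S).) -/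
open MeasureTheory

/-!
Pointwise on `S` one has `0 < ρ < R` and `m² ≥ 1`, so `((ρ/m) ṽ)² ρ ≤ ρ³ ṽ² ≤ R³ ṽ²`.
For the gradient, the product rule gives `∂_ρ((ρ/m) ṽ) = (ṽ + ρ ∂_ρ ṽ)/m` and
`∂_z((ρ/m) ṽ) = ρ ∂_z ṽ / m`, while the angular component `-(m/ρ)(ρ/m) ṽ` is just `-ṽ`;
with `(x + y)² ≤ 2x² + 2y²` the weighted squared norm is at most `3ρ ṽ² + 2ρ³ |∇ṽ|²`.
Integrating these pointwise bounds over `S` gives the two inequalities.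
-/

section PartialDerivatives

variable {f g : ℝ × ℝ → ℝ} {p : ℝ × ℝ}

theorem pdRho_mul (hf : DifferentiableAt ℝ f p) (hg : DifferentiableAt ℝ g p) :
    pdRho (fun r => f r * g r) p = f p * pdRho g p + g p * pdRho f p := by
  simp [pdRho, fderiv_fun_mul hf hg]

theorem pdZ_mul (hf : DifferentiableAt ℝ f p) (hg : DifferentiableAt ℝ g p) :
    pdZ (fun r => f r * g r) p = f p * pdZ g p + g p * pdZ f p := by
  simp [pdZ, fderiv_fun_mul hf hg]

theorem hasFDerivAt_fst_div (c : ℝ) (p : ℝ × ℝ) :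
    HasFDerivAt (fun r : ℝ × ℝ => r.1 / c) (c⁻¹ • ContinuousLinearMap.fst ℝ ℝ ℝ) p := by
  simpa only [div_eq_mul_inv] using (hasFDerivAt_fst (p := p)).mul_const c⁻¹

theorem pdRho_fst_div (c : ℝ) (p : ℝ × ℝ) : pdRho (fun r => r.1 / c) p = c⁻¹ := by
  simp [pdRho, (hasFDerivAt_fst_div c p).fderiv]

theorem pdZ_fst_div (c : ℝ) (p : ℝ × ℝ) : pdZ (fun r => r.1 / c) p = 0 := by
  simp [pdZ, (hasFDerivAt_fst_div c p).fderiv]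

theorem pdRho_fst_div_mul (c : ℝ) (hg : DifferentiableAt ℝ g p) :
    pdRho (fun r => r.1 / c * g r) p = g p / c + p.1 / c * pdRho g p := by
  rw [pdRho_mul (hasFDerivAt_fst_div c p).differentiableAt hg, pdRho_fst_div]
  ring

theorem pdZ_fst_div_mul (c : ℝ) (hg : DifferentiableAt ℝ g p) :
    pdZ (fun r => r.1 / c * g r) p = p.1 / c * pdZ g p := by
  rw [pdZ_mul (hasFDerivAt_fst_div c p).differentiableAt hg, pdZ_fst_div]
  ring

end PartialDerivatives

section PointwiseBounds

variable {m ρ R : ℝ}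

theorem sq_div_le_sq (hm : 1 ≤ m ^ 2) (x : ℝ) : (x / m) ^ 2 ≤ x ^ 2 := by
  rw [div_pow]
  exact div_le_self (sq_nonneg x) hm

theorem sq_fst_div_mul_mul_le (hm : 1 ≤ m ^ 2) (hρ : 0 < ρ) (hρR : ρ < R) (x : ℝ) :
    (ρ / m * x) ^ 2 * ρ ≤ R ^ 3 * x ^ 2 := by
  have hdiv : (ρ / m * x) ^ 2 ≤ (ρ * x) ^ 2 := by
    simpa only [div_mul_eq_mul_div] using sq_div_le_sq hm (ρ * x)
  have hρ3 : ρ ^ 3 ≤ R ^ 3 := pow_le_pow_left₀ hρ.le hρR.le 3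
  calc (ρ / m * x) ^ 2 * ρ ≤ (ρ * x) ^ 2 * ρ := mul_le_mul_of_nonneg_right hdiv hρ.le
    _ = ρ ^ 3 * x ^ 2 := by ring
    _ ≤ R ^ 3 * x ^ 2 := mul_le_mul_of_nonneg_right hρ3 (sq_nonneg x)

theorem gradSq_fst_div_mul_mul_le (hm : 1 ≤ m ^ 2) (hρ : 0 < ρ) (hρR : ρ < R) (x a b : ℝ) :
    ((x / m + ρ / m * a) ^ 2 + (ρ / m * b) ^ 2 + (-(m / ρ * (ρ / m * x))) ^ 2) * ρ
      ≤ 3 * R * x ^ 2 + 2 * R ^ 3 * (a ^ 2 + b ^ 2) := by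
  have hm0 : m ≠ 0 := by rintro rfl; norm_num at hm
  have hangular : (-(m / ρ * (ρ / m * x))) ^ 2 = x ^ 2 := by field_simp
  have hrho : (x / m + ρ / m * a) ^ 2 ≤ 2 * x ^ 2 + 2 * ρ ^ 2 * a ^ 2 := by
    calc (x / m + ρ / m * a) ^ 2 = ((x + ρ * a) / m) ^ 2 := by ring
      _ ≤ (x + ρ * a) ^ 2 := sq_div_le_sq hm _
      _ ≤ 2 * x ^ 2 + 2 * ρ ^ 2 * a ^ 2 := by nlinarith [sq_nonneg (x - ρ * a)]
  have hz : (ρ / m * b) ^ 2 ≤ ρ ^ 2 * b ^ 2 := by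
    simpa only [div_mul_eq_mul_div, mul_pow] using sq_div_le_sq hm (ρ * b)
  have hρ3 : ρ ^ 3 ≤ R ^ 3 := pow_le_pow_left₀ hρ.le hρR.le 3
  rw [hangular]
  calc ((x / m + ρ / m * a) ^ 2 + (ρ / m * b) ^ 2 + x ^ 2) * ρ
      ≤ (2 * x ^ 2 + 2 * ρ ^ 2 * a ^ 2 + ρ ^ 2 * b ^ 2 + x ^ 2) * ρ := by gcongr
    _ ≤ 3 * ρ * x ^ 2 + 2 * ρ ^ 3 * (a ^ 2 + b ^ 2) := by nlinarith [sq_nonneg b]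
    _ ≤ 3 * R * x ^ 2 + 2 * R ^ 3 * (a ^ 2 + b ^ 2) := by gcongr

end PointwiseBounds

section SetLIntegral

variable {α : Type*} [MeasurableSpace α] {μ : Measure α} {s : Set α} {f g h : α → ℝ}

theorem setLIntegral_ofReal_le_const_mul (hs : MeasurableSet s) (c : ℝ)
    (hg : ∀ x ∈ s, 0 ≤ g x) (hfg : ∀ x ∈ s, f x ≤ c * g x) :
    ∫⁻ x in s, ENNReal.ofReal (f x) ∂μ ≤ ENNReal.ofReal c * ∫⁻ x in s, ENNReal.ofReal (g x) ∂μ := by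
  rw [← lintegral_const_mul' _ _ ENNReal.ofReal_ne_top]
  refine setLIntegral_mono' hs fun x hx => ?_
  rw [← ENNReal.ofReal_mul' (hg x hx)]
  exact ENNReal.ofReal_le_ofReal (hfg x hx)

theorem setLIntegral_ofReal_le_const_mul_add_const_mul (hs : MeasurableSet s) (a b : ℝ)
    (hgm : AEMeasurable g (μ.restrict s)) (hg : ∀ x ∈ s, 0 ≤ g x) (hh : ∀ x ∈ s, 0 ≤ h x)
    (hfgh : ∀ x ∈ s, f x ≤ a * g x + b * h x) :
    ∫⁻ x in s, ENNReal.ofReal (f x) ∂μ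
      ≤ ENNReal.ofReal a * ∫⁻ x in s, ENNReal.ofReal (g x) ∂μ
        + ENNReal.ofReal b * ∫⁻ x in s, ENNReal.ofReal (h x) ∂μ := by
  simp_rw [← lintegral_const_mul' _ _ ENNReal.ofReal_ne_top]
  rw [← lintegral_add_left' ((hgm.ennreal_ofReal).const_mul _)]
  refine setLIntegral_mono' hs fun x hx => ?_
  rw [← ENNReal.ofReal_mul' (hg x hx), ← ENNReal.ofReal_mul' (hh x hx)]
  exact (ENNReal.ofReal_le_ofReal (hfgh x hx)).trans ENNReal.ofReal_add_le

end SetLIntegral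

theorem conformity_scalar_general (m : ℤ) (hm' : 1 ≤ |m|) (R : ℝ)
    (S : Set (ℝ × ℝ)) (hS : IsOpen S) (hSsub : ∀ p ∈ S, p.1 ∈ Set.Ioo 0 R)
    (v : ℝ × ℝ → ℝ) (hv : ContDiffOn ℝ 1 v S) :
    (∫⁻ p in S, ENNReal.ofReal ((p.1 / (m : ℝ) * v p) ^ 2 * p.1)
        ≤ ENNReal.ofReal (R ^ 3) * ∫⁻ p in S, ENNReal.ofReal ((v p) ^ 2))
    ∧ (∫⁻ p in S, ENNReal.ofReal
          (((pdRho (fun r => r.1 / (m : ℝ) * v r) p) ^ 2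
            + (pdZ (fun r => r.1 / (m : ℝ) * v r) p) ^ 2
            + (-(((m : ℝ) / p.1) * (p.1 / (m : ℝ) * v p))) ^ 2) * p.1)
        ≤ ENNReal.ofReal (3 * R) * (∫⁻ p in S, ENNReal.ofReal ((v p) ^ 2))
          + ENNReal.ofReal (2 * R ^ 3)
            * ∫⁻ p in S, ENNReal.ofReal ((pdRho v p) ^ 2 + (pdZ v p) ^ 2)) := by
  have hm : (1 : ℝ) ≤ (m : ℝ) ^ 2 := by
    rw [← sq_abs, ← Int.cast_abs]
    exact one_le_pow₀ (by exact_mod_cast hm')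
  have hvm : AEMeasurable (fun p => v p ^ 2) (volume.restrict S) :=
    (hv.continuousOn.aemeasurable hS.measurableSet).pow_const 2
  refine ⟨setLIntegral_ofReal_le_const_mul hS.measurableSet _ (fun p _ => sq_nonneg _)
      fun p hp => sq_fst_div_mul_mul_le hm (hSsub p hp).1 (hSsub p hp).2 _,
    setLIntegral_ofReal_le_const_mul_add_const_mul hS.measurableSet _ _ hvm
      (fun p _ => sq_nonneg _) (fun p _ => by positivity) fun p hp => ?_⟩
  have hvp : DifferentiableAt ℝ v p :=
    (hv.contDiffAt (hS.mem_nhds hp)).differentiableAt one_ne_zero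
  rw [pdRho_fst_div_mul _ hvp, pdZ_fst_div_mul _ hvp]
  exact gradSq_fst_div_mul_mul_le hm (hSsub p hp).1 (hSsub p hp).2 _ _ _

/-- Conformity bound for the mode-m scalar space: weighted bounds for `(ρ/m) ṽ`
and `grad^m((ρ/m) ṽ)` in terms of unweighted `H¹`-type integrals of `ṽ`. -/
theorem conformity_scalar (m : ℤ) (hm : m ≠ 0) (hm' : 1 ≤ |m|) (R : ℝ) (hR : 0 < R)
    (S : Set (ℝ × ℝ)) (hS : IsOpen S) (hSsub : ∀ p ∈ S, p.1 ∈ Set.Ioo 0 R)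
    (v : ℝ × ℝ → ℝ) (hv : ContDiffOn ℝ 1 v S) :
    (∫⁻ p in S, ENNReal.ofReal ((p.1 / (m : ℝ) * v p) ^ 2 * p.1)
        ≤ ENNReal.ofReal (R ^ 3) * ∫⁻ p in S, ENNReal.ofReal ((v p) ^ 2))
    ∧ (∫⁻ p in S, ENNReal.ofReal
          (((pdRho (fun r => r.1 / (m : ℝ) * v r) p) ^ 2
            + (pdZ (fun r => r.1 / (m : ℝ) * v r) p) ^ 2
            + (-(((m : ℝ) / p.1) * (p.1 / (m : ℝ) * v p))) ^ 2) * p.1)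
        ≤ ENNReal.ofReal (3 * R) * (∫⁻ p in S, ENNReal.ofReal ((v p) ^ 2))
          + ENNReal.ofReal (2 * R ^ 3)
            * ∫⁻ p in S, ENNReal.ofReal ((pdRho v p) ^ 2 + (pdZ v p) ^ 2)) :=
  conformity_scalar_general m hm' R S hS hSsub v hv
end

section
/- Let m be a nonzero integer with |m| ≥ 1, R > 0, S an open subset of (0,R) × ℝ, and ṽ = (ṽ₁, ṽ₂, ṽ₃) : S → ℝ³ with ṽ₁, ṽ₂ continuously differentiable on S. Let u = η_{m,2}^{-1}(ṽ) = (ṽ₁, ṽ₂, (ρ ṽ₃ + ṽ₁)/m). Then, as inequalities of (possibly infinite) Lebesgue integrals of nonnegative measurable functions, ∫_S |u|² ρ dρ dz ≤ 3R ∫_S (ṽ₁² + ṽ₂²) dρ dz + 2R³ ∫_S ṽ₃² dρ dz, and ∫_S (div^m u)² ρ dρ dz ≤ 2R ∫_S (∂_ρ ṽ₁ + ∂_z ṽ₂)² dρ dz + 2R ∫_S ṽ₃² dρ dz, where |·| denotes the Euclidean norm on ℝ³. (Conformity bound for the mode-m face space: if (ṽ₁,ṽ₂) ∈ H(div; S)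 and ṽ₃ ∈ L²(S), then η_{m,2}^{-1}(ṽ) lies in the weighted space H_ρ(div^m; S).) -/
open MeasureTheory

/-!
Both bounds are integrated pointwise inequalities. For `0 < ρ < R`, `|m| ≥ 1` gives
`((ρ ṽ₃ + ṽ₁)/m)² ≤ 2ρ² ṽ₃² + 2ṽ₁²`, whence the first bound after multiplying by `ρ < R`.
For the second, the product rule `∂_ρ(ρ ṽ₁) = ṽ₁ + ρ ∂_ρ ṽ₁` makes the `ṽ₁/ρ` terms
cancel, so that `div^m u = ∂_ρ ṽ₁ + ∂_z ṽ₂ - ṽ₃` exactly, and `(a - b)² ≤ 2a² + 2b²`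
concludes.
-/

lemma lintegral_ofReal_le_add_of_ae_le {α : Type*} [MeasurableSpace α] {μ : Measure α}
    {f g h : α → ℝ} {c d : ℝ} (hc : 0 ≤ c) (hd : 0 ≤ d) (hf : AEMeasurable f μ)
    (hle : ∀ᵐ p ∂μ, h p ≤ c * f p + d * g p) :
    ∫⁻ p, ENNReal.ofReal (h p) ∂μ
      ≤ ENNReal.ofReal c * ∫⁻ p, ENNReal.ofReal (f p) ∂μ
        + ENNReal.ofReal d * ∫⁻ p, ENNReal.ofReal (g p) ∂μ := by
  calc ∫⁻ p, ENNReal.ofReal (h p) ∂μ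
      ≤ ∫⁻ p, (ENNReal.ofReal c * ENNReal.ofReal (f p)
          + ENNReal.ofReal d * ENNReal.ofReal (g p)) ∂μ := by
        refine lintegral_mono_ae (hle.mono fun p hp => ?_)
        rw [← ENNReal.ofReal_mul hc, ← ENNReal.ofReal_mul hd]
        exact (ENNReal.ofReal_le_ofReal hp).trans ENNReal.ofReal_add_le
    _ = _ := by
        rw [lintegral_add_left' (hf.ennreal_ofReal.const_mul _),
          lintegral_const_mul' _ _ ENNReal.ofReal_ne_top,
          lintegral_const_mul' _ _ ENNReal.ofReal_ne_top]

lemma sq_div_le_sq_of_one_le_abs {x y : ℝ} (hy : 1 ≤ |y|) : (x / y) ^ 2 ≤ x ^ 2 := by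
  have hy2 : 1 ≤ y ^ 2 := by nlinarith [sq_abs y]
  rw [div_pow]
  exact div_le_self (sq_nonneg x) hy2

lemma face_field_sq_mul_le {ρ R a b c y : ℝ} (hρ : ρ ∈ Set.Ioo 0 R) (hy : 1 ≤ |y|) :
    (a ^ 2 + b ^ 2 + ((ρ * c + a) / y) ^ 2) * ρ
      ≤ 3 * R * (a ^ 2 + b ^ 2) + 2 * R ^ 3 * c ^ 2 := by
  obtain ⟨hρ0, hρR⟩ := hρ
  have hu : ((ρ * c + a) / y) ^ 2 ≤ 2 * (ρ ^ 2 * c ^ 2 + a ^ 2) :=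
    (sq_div_le_sq_of_one_le_abs hy).trans
      (by simpa [mul_pow] using add_sq_le (a := ρ * c) (b := a))
  have hρ3 : ρ ^ 3 ≤ R ^ 3 := pow_le_pow_left₀ hρ0.le hρR.le 3
  nlinarith [mul_le_mul_of_nonneg_right hu hρ0.le, mul_le_mul_of_nonneg_left hρ3 (sq_nonneg c),
    mul_le_mul_of_nonneg_left hρR.le (sq_nonneg a),
    mul_le_mul_of_nonneg_left hρR.le (sq_nonneg b)]

lemma pdRho_fst_mul {v : ℝ × ℝ → ℝ} {p : ℝ × ℝ} (hv : DifferentiableAt ℝ v p) :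
    pdRho (fun r => r.1 * v r) p = v p + p.1 * pdRho v p := by
  simp [pdRho, fderiv_fun_mul differentiableAt_fst hv, fderiv_fst, add_comm]

lemma face_div_eq {ρ a d c e y : ℝ} (hρ : ρ ≠ 0) (hy : y ≠ 0) :
    (1 / ρ) * (a + ρ * d) - (y / ρ) * ((ρ * c + a) / y) + e = d + e - c := by
  field_simp
  ring

lemma sub_sq_mul_le {ρ R x c : ℝ} (hρ : ρ ∈ Set.Ioo 0 R) :
    (x - c) ^ 2 * ρ ≤ 2 * R * x ^ 2 + 2 * R * c ^ 2 := by
  obtain ⟨hρ0, hρR⟩ := hρ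
  have h := mul_le_mul_of_nonneg_right (add_sq_le (a := x) (b := -c)) hρ0.le
  rw [← sub_eq_add_neg, neg_sq] at h
  nlinarith [mul_le_mul_of_nonneg_left hρR.le (add_nonneg (sq_nonneg x) (sq_nonneg c))]

section Continuity

variable {S : Set (ℝ × ℝ)} {v : ℝ × ℝ → ℝ}

lemma ContDiffOn.continuousOn_pdRho (hv : ContDiffOn ℝ 1 v S) (hS : IsOpen S) :
    ContinuousOn (pdRho v) S :=
  (hv.continuousOn_fderiv_of_isOpen hS le_rfl).clm_apply continuousOn_const

lemma ContDiffOn.continuousOn_pdZ (hv : ContDiffOn ℝ 1 v S) (hS : IsOpen S) :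
    ContinuousOn (pdZ v) S :=
  (hv.continuousOn_fderiv_of_isOpen hS le_rfl).clm_apply continuousOn_const

end Continuity

theorem conformity_face_general (m : ℤ) (hm' : 1 ≤ |m|) (R : ℝ) (hR : 0 < R)
    (S : Set (ℝ × ℝ)) (hS : IsOpen S) (hSsub : ∀ p ∈ S, p.1 ∈ Set.Ioo 0 R)
    (v1 v2 v3 : ℝ × ℝ → ℝ)
    (hv1 : ContDiffOn ℝ 1 v1 S) (hv2 : ContDiffOn ℝ 1 v2 S) :
    (∫⁻ p in S, ENNReal.ofReal
          (((v1 p) ^ 2 + (v2 p) ^ 2 + ((p.1 * v3 p + v1 p) / (m : ℝ)) ^ 2) * p.1)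
        ≤ ENNReal.ofReal (3 * R)
            * (∫⁻ p in S, ENNReal.ofReal ((v1 p) ^ 2 + (v2 p) ^ 2))
          + ENNReal.ofReal (2 * R ^ 3) * ∫⁻ p in S, ENNReal.ofReal ((v3 p) ^ 2))
    ∧ (∫⁻ p in S, ENNReal.ofReal
          (((1 / p.1) * pdRho (fun r => r.1 * v1 r) p
              - ((m : ℝ) / p.1) * ((p.1 * v3 p + v1 p) / (m : ℝ)) + pdZ v2 p) ^ 2 * p.1)
        ≤ ENNReal.ofReal (2 * R)
            * (∫⁻ p in S, ENNReal.ofReal ((pdRho v1 p + pdZ v2 p) ^ 2))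
          + ENNReal.ofReal (2 * R) * ∫⁻ p in S, ENNReal.ofReal ((v3 p) ^ 2)) := by
  have hm : 1 ≤ |(m : ℝ)| := by exact_mod_cast hm'
  have hSm : MeasurableSet S := hS.measurableSet
  constructor
  · refine lintegral_ofReal_le_add_of_ae_le (by positivity) (by positivity)
      (((hv1.continuousOn.pow 2).add (hv2.continuousOn.pow 2)).aemeasurable hSm) ?_
    filter_upwards [ae_restrict_mem hSm] with p hp
    exact face_field_sq_mul_le (hSsub p hp) hm
  · refine lintegral_ofReal_le_add_of_ae_le (by positivity) (by positivity)
      ((((hv1.continuousOn_pdRho hS).add (hv2.continuousOn_pdZ hS)).pow 2).aemeasurable hSm) ?_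
    filter_upwards [ae_restrict_mem hSm] with p hp
    have hv1p : DifferentiableAt ℝ v1 p :=
      (hv1.differentiableOn one_ne_zero).differentiableAt (hS.mem_nhds hp)
    rw [pdRho_fst_mul hv1p, face_div_eq (hSsub p hp).1.ne' (abs_pos.mp (one_pos.trans_le hm))]
    exact sub_sq_mul_le (hSsub p hp)

/-- Conformity bound for the mode-m face space: weighted bounds for
`u = η_{m,2}^{-1}(ṽ)` and `div^m u`. -/
theorem conformity_face (m : ℤ) (hm : m ≠ 0) (hm' : 1 ≤ |m|) (R : ℝ) (hR : 0 < R)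
    (S : Set (ℝ × ℝ)) (hS : IsOpen S) (hSsub : ∀ p ∈ S, p.1 ∈ Set.Ioo 0 R)
    (v1 v2 v3 : ℝ × ℝ → ℝ)
    (hv1 : ContDiffOn ℝ 1 v1 S) (hv2 : ContDiffOn ℝ 1 v2 S) :
    (∫⁻ p in S, ENNReal.ofReal
          (((v1 p) ^ 2 + (v2 p) ^ 2 + ((p.1 * v3 p + v1 p) / (m : ℝ)) ^ 2) * p.1)
        ≤ ENNReal.ofReal (3 * R)
            * (∫⁻ p in S, ENNReal.ofReal ((v1 p) ^ 2 + (v2 p) ^ 2))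
          + ENNReal.ofReal (2 * R ^ 3) * ∫⁻ p in S, ENNReal.ofReal ((v3 p) ^ 2))
    ∧ (∫⁻ p in S, ENNReal.ofReal
          (((1 / p.1) * pdRho (fun r => r.1 * v1 r) p
              - ((m : ℝ) / p.1) * ((p.1 * v3 p + v1 p) / (m : ℝ)) + pdZ v2 p) ^ 2 * p.1)
        ≤ ENNReal.ofReal (2 * R)
            * (∫⁻ p in S, ENNReal.ofReal ((pdRho v1 p + pdZ v2 p) ^ 2))
          + ENNReal.ofReal (2 * R) * ∫⁻ p in S, ENNReal.ofReal ((v3 p) ^ 2)) :=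
  conformity_face_general m hm' R hR S hS hSsub v1 v2 v3 hv1 hv2
end
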